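/- arXiv:1008.0819 — 5 statements merged into one kernel-verified Lean document; each statement's English description precedes it below -/
import Mathlib

section
/- Let σ : ℂ → ℝ be a smooth function with σ(w) > 0 for all w ∈ ℂ, and suppose the second Wirtinger derivative σ_ww vanishes identically on ℂ. Let L(w) = log σ(w). Then for every point w₀ ∈ ℂ and all complex numbers P, Q, the following identity holds at w₀: 8·L_www·P·Q + 8·L_{ww w̄}·(|P|² + |Q|²) + 8·L_{w w̄ w̄}·conj(P)·conj(Q) + 48·L_w·L_ww·P·Q + 16·L_w·L_{w w̄}·(|P|² + |Q|²) + 16·L_{w̄}·L_{w w̄}·conj(P)·conj(Q) + 32·(L_w)³·P·Q = 0, where all derivatives are Wirtinger derivatives evaluated at w₀. -/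
noncomputable def wDeriv (f : ℂ → ℂ) (w : ℂ) : ℂ :=
  (fderiv ℝ f w 1 - Complex.I * fderiv ℝ f w Complex.I) / 2

noncomputable def wDerivBar (f : ℂ → ℂ) (w : ℂ) : ℂ :=
  (fderiv ℝ f w 1 + Complex.I * fderiv ℝ f w Complex.I) / 2

open Complex ContDiff

lemma one_le_inf : (∞ : WithTop ℕ∞) ≠ 0 := by simp
lemma two_le_inf : minSmoothness ℝ 2 ≤ ∞ := by rw [minSmoothness_of_isRCLikeNormedField]; norm_cast

lemma smooth_dapp {f : ℂ → ℂ} (hf : ContDiff ℝ ∞ f) (a : ℂ) :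
    ContDiff ℝ ∞ fun w => fderiv ℝ f w a :=
  (hf.fderiv_right (le_refl _)).clm_apply contDiff_const

lemma smooth_wDeriv {f : ℂ → ℂ} (hf : ContDiff ℝ ∞ f) : ContDiff ℝ ∞ (wDeriv f) := by
  unfold wDeriv
  exact ((smooth_dapp hf 1).sub (contDiff_const.mul (smooth_dapp hf I))).div_const 2

lemma smooth_wDerivBar {f : ℂ → ℂ} (hf : ContDiff ℝ ∞ f) : ContDiff ℝ ∞ (wDerivBar f) := by
  unfold wDerivBar
  exact ((smooth_dapp hf 1).add (contDiff_const.mul (smooth_dapp hf I))).div_const 2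

lemma wDeriv_mul {f g : ℂ → ℂ} {w : ℂ} (hf : DifferentiableAt ℝ f w)
    (hg : DifferentiableAt ℝ g w) :
    wDeriv (fun x => f x * g x) w = wDeriv f w * g w + f w * wDeriv g w := by
  unfold wDeriv
  rw [fderiv_fun_mul hf hg]
  simp only [ContinuousLinearMap.add_apply, ContinuousLinearMap.smul_apply, smul_eq_mul]
  ring

lemma wDerivBar_mul {f g : ℂ → ℂ} {w : ℂ} (hf : DifferentiableAt ℝ f w)
    (hg : DifferentiableAt ℝ g w) :
    wDerivBar (fun x => f x * g x) w = wDerivBar f w * g w + f w * wDerivBar g w := by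
  unfold wDerivBar
  rw [fderiv_fun_mul hf hg]
  simp only [ContinuousLinearMap.add_apply, ContinuousLinearMap.smul_apply, smul_eq_mul]
  ring

lemma wDeriv_neg {f : ℂ → ℂ} {w : ℂ} :
    wDeriv (fun x => -f x) w = -wDeriv f w := by
  unfold wDeriv
  rw [fderiv_fun_neg]
  simp only [ContinuousLinearMap.neg_apply]
  ring

lemma wDerivBar_neg {f : ℂ → ℂ} {w : ℂ} :
    wDerivBar (fun x => -f x) w = -wDerivBar f w := by
  unfold wDerivBar
  rw [fderiv_fun_neg]
  simp only [ContinuousLinearMap.neg_apply]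
  ring

lemma d2_eq {f : ℂ → ℂ} (hf : ContDiff ℝ ∞ f) (w a b : ℂ) :
    fderiv ℝ (fun x => fderiv ℝ f x a) w b = fderiv ℝ (fderiv ℝ f) w b a := by
  have hd : DifferentiableAt ℝ (fderiv ℝ f) w :=
    ((hf.fderiv_right (m := ∞) (le_refl _)).differentiable one_le_inf).differentiableAt
  rw [fderiv_clm_apply hd (differentiableAt_const a)]
  simp

lemma d2_symm {f : ℂ → ℂ} (hf : ContDiff ℝ ∞ f) (w a b : ℂ) :
    fderiv ℝ (fun x => fderiv ℝ f x a) w b = fderiv ℝ (fun x => fderiv ℝ f x b) w a := by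
  rw [d2_eq hf, d2_eq hf]
  exact (hf.contDiffAt.isSymmSndFDerivAt two_le_inf).eq b a

lemma fderiv_wDerivBar_apply {f : ℂ → ℂ} (hf : ContDiff ℝ ∞ f) (w b : ℂ) :
    fderiv ℝ (wDerivBar f) w b
      = (fderiv ℝ (fun x => fderiv ℝ f x 1) w b
          + I * fderiv ℝ (fun x => fderiv ℝ f x I) w b) / 2 := by
  have h1 : DifferentiableAt ℝ (fun x => fderiv ℝ f x 1) w :=
    ((smooth_dapp hf 1).differentiable one_le_inf).differentiableAt
  have hI : DifferentiableAt ℝ (fun x => fderiv ℝ f x I) w :=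
    ((smooth_dapp hf I).differentiable one_le_inf).differentiableAt
  have e : wDerivBar f = fun x => (fderiv ℝ f x 1 + I * fderiv ℝ f x I) * (2:ℂ)⁻¹ := by
    funext x; unfold wDerivBar; rw [div_eq_mul_inv]
  rw [e, HasFDerivAt.fderiv (f := fun x => (fderiv ℝ f x 1 + I * fderiv ℝ f x I) * (2:ℂ)⁻¹)
    (((h1.hasFDerivAt).add ((hI.hasFDerivAt).const_mul I)).mul_const ((2:ℂ)⁻¹))]
  simp only [ContinuousLinearMap.smul_apply, ContinuousLinearMap.add_apply, smul_eq_mul]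
  field_simp

lemma fderiv_wDeriv_apply {f : ℂ → ℂ} (hf : ContDiff ℝ ∞ f) (w b : ℂ) :
    fderiv ℝ (wDeriv f) w b
      = (fderiv ℝ (fun x => fderiv ℝ f x 1) w b
          - I * fderiv ℝ (fun x => fderiv ℝ f x I) w b) / 2 := by
  have h1 : DifferentiableAt ℝ (fun x => fderiv ℝ f x 1) w :=
    ((smooth_dapp hf 1).differentiable one_le_inf).differentiableAt
  have hI : DifferentiableAt ℝ (fun x => fderiv ℝ f x I) w :=
    ((smooth_dapp hf I).differentiable one_le_inf).differentiableAt
  have e : wDeriv f = fun x => (fderiv ℝ f x 1 - I * fderiv ℝ f x I) * (2:ℂ)⁻¹ := by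
    funext x; unfold wDeriv; rw [div_eq_mul_inv]
  rw [e, HasFDerivAt.fderiv (f := fun x => (fderiv ℝ f x 1 - I * fderiv ℝ f x I) * (2:ℂ)⁻¹)
    (((h1.hasFDerivAt).sub ((hI.hasFDerivAt).const_mul I)).mul_const ((2:ℂ)⁻¹))]
  simp only [ContinuousLinearMap.smul_apply, ContinuousLinearMap.sub_apply,
    ContinuousLinearMap.add_apply, smul_eq_mul]
  field_simp

lemma wDeriv_wDerivBar_comm {f : ℂ → ℂ} (hf : ContDiff ℝ ∞ f) (w : ℂ) :
    wDeriv (wDerivBar f) w = wDerivBar (wDeriv f) w := by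
  show (fderiv ℝ (wDerivBar f) w 1 - I * fderiv ℝ (wDerivBar f) w I) / 2
      = (fderiv ℝ (wDeriv f) w 1 + I * fderiv ℝ (wDeriv f) w I) / 2
  rw [fderiv_wDerivBar_apply hf, fderiv_wDerivBar_apply hf,
      fderiv_wDeriv_apply hf, fderiv_wDeriv_apply hf, d2_symm hf w 1 I]
  ring

lemma fderiv_conj_apply {f : ℂ → ℂ} {w : ℂ} (hf : DifferentiableAt ℝ f w) (v : ℂ) :
    fderiv ℝ (fun x => (starRingEnd ℂ) (f x)) w v = (starRingEnd ℂ) (fderiv ℝ f w v) := by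
  have h : fderiv ℝ (fun x => (starRingEnd ℂ) (f x)) w
      = (Complex.conjCLE.toContinuousLinearMap).comp (fderiv ℝ f w) := by
    apply HasFDerivAt.fderiv
    exact (Complex.conjCLE.toContinuousLinearMap.hasFDerivAt).comp w hf.hasFDerivAt
  rw [h]
  rfl

lemma wDerivBar_conj {f : ℂ → ℂ} {w : ℂ} (hf : DifferentiableAt ℝ f w) :
    wDerivBar (fun x => (starRingEnd ℂ) (f x)) w = (starRingEnd ℂ) (wDeriv f w) := by
  unfold wDeriv wDerivBar
  rw [fderiv_conj_apply hf, fderiv_conj_apply hf]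
  simp only [map_div₀, map_sub, map_mul, Complex.conj_I, map_ofNat]
  ring

lemma wDeriv_conj {f : ℂ → ℂ} {w : ℂ} (hf : DifferentiableAt ℝ f w) :
    wDeriv (fun x => (starRingEnd ℂ) (f x)) w = (starRingEnd ℂ) (wDerivBar f w) := by
  unfold wDeriv wDerivBar
  rw [fderiv_conj_apply hf, fderiv_conj_apply hf]
  simp only [map_div₀, map_add, map_mul, Complex.conj_I, map_ofNat]
  ring

/-- If `σ : ℂ → ℝ` is smooth, positive, and anti-bianalytic
(`σ_ww ≡ 0`), and `L = log σ`, then for every `w₀ ∈ ℂ` and all `P Q : ℂ`,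
`8·L_www·P·Q + 8·L_{ww w̄}·(|P|² + |Q|²) + 8·L_{w w̄ w̄}·conj P·conj Q
 + 48·L_w·L_ww·P·Q + 16·L_w·L_{w w̄}·(|P|² + |Q|²)
 + 16·L_w̄·L_{w w̄}·conj P·conj Q + 32·(L_w)³·P·Q = 0` at `w₀`. -/
theorem stmt_10 (σ : ℂ → ℝ) (hσ : ContDiff ℝ (⊤ : ℕ∞) σ) (hpos : ∀ w : ℂ, 0 < σ w)
    (hww : ∀ w : ℂ, wDeriv (wDeriv (fun z => ((σ z : ℝ) : ℂ))) w = 0)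
    (L : ℂ → ℂ) (hL : L = fun w => ((Real.log (σ w) : ℝ) : ℂ)) :
    ∀ (w₀ P Q : ℂ),
      8 * wDeriv (wDeriv (wDeriv L)) w₀ * P * Q
      + 8 * wDerivBar (wDeriv (wDeriv L)) w₀ *
          ((‖P‖ ^ 2 + ‖Q‖ ^ 2 : ℝ) : ℂ)
      + 8 * wDerivBar (wDerivBar (wDeriv L)) w₀ *
          (starRingEnd ℂ P) * (starRingEnd ℂ Q)
      + 48 * wDeriv L w₀ * wDeriv (wDeriv L) w₀ * P * Q
      + 16 * wDeriv L w₀ * wDerivBar (wDeriv L) w₀ *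
          ((‖P‖ ^ 2 + ‖Q‖ ^ 2 : ℝ) : ℂ)
      + 16 * wDerivBar L w₀ * wDerivBar (wDeriv L) w₀ *
          (starRingEnd ℂ P) * (starRingEnd ℂ Q)
      + 32 * (wDeriv L w₀) ^ 3 * P * Q = 0 := by
  intro w₀ P Q
  set σc : ℂ → ℂ := fun z => ((σ z : ℝ) : ℂ) with hσc_def
  have hσ' : ContDiff ℝ ∞ σ := hσ.of_le (by simp)
  have hσc : ContDiff ℝ ∞ σc :=
    Complex.ofRealCLM.contDiff.comp hσ'
  have hLσ : ContDiff ℝ ∞ (fun w => Real.log (σ w)) :=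
    hσ'.log (fun w => (hpos w).ne')
  have hLs : ContDiff ℝ ∞ L := by
    rw [hL]; exact Complex.ofRealCLM.contDiff.comp hLσ
  -- fderiv computations
  have hderσc : ∀ w v : ℂ, fderiv ℝ σc w v = ((fderiv ℝ σ w v : ℝ) : ℂ) := by
    intro w v
    have h : HasFDerivAt σc (Complex.ofRealCLM.comp (fderiv ℝ σ w)) w :=
      Complex.ofRealCLM.hasFDerivAt.comp w (hσ'.differentiable one_le_inf w).hasFDerivAt
    rw [h.fderiv]
    rfl
  have hderL : ∀ w v : ℂ, fderiv ℝ L w v = (((σ w)⁻¹ * fderiv ℝ σ w v : ℝ) : ℂ) := by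
    intro w v
    have hlog : HasFDerivAt (fun w => Real.log (σ w)) ((σ w)⁻¹ • fderiv ℝ σ w) w :=
      (Real.hasDerivAt_log (hpos w).ne').comp_hasFDerivAt w
        (hσ'.differentiable one_le_inf w).hasFDerivAt
    have h : HasFDerivAt L (Complex.ofRealCLM.comp ((σ w)⁻¹ • fderiv ℝ σ w)) w := by
      rw [hL]
      exact Complex.ofRealCLM.hasFDerivAt.comp w hlog
    rw [h.fderiv]
    simp [ContinuousLinearMap.smul_apply, smul_eq_mul]
  have hne : ∀ w : ℂ, (σ w : ℂ) ≠ 0 := fun w => by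
    exact_mod_cast (hpos w).ne'
  -- key identity  σ * L_w = σ_w
  have key : ∀ w : ℂ, σc w * wDeriv L w = wDeriv σc w := by
    intro w
    unfold wDeriv
    rw [hderL, hderL, hderσc, hderσc]
    have : (σ w : ℂ) ≠ 0 := hne w
    push_cast
    field_simp
    ring
  -- differentiabilities
  have dL : ∀ w, DifferentiableAt ℝ L w := fun w =>
    (hLs.differentiable one_le_inf).differentiableAt
  have dσc : ∀ w, DifferentiableAt ℝ σc w := fun w =>
    (hσc.differentiable one_le_inf).differentiableAt
  have hLw : ContDiff ℝ ∞ (wDeriv L) := smooth_wDeriv hLs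
  have dLw : ∀ w, DifferentiableAt ℝ (wDeriv L) w := fun w =>
    (hLw.differentiable one_le_inf).differentiableAt
  -- F1 : L_ww = -(L_w)^2
  have F1 : ∀ w : ℂ, wDeriv (wDeriv L) w = -(wDeriv L w) ^ 2 := by
    intro w
    have e : wDeriv (fun x => σc x * wDeriv L x) w = wDeriv (wDeriv σc) w := by
      congr 1
      funext x
      exact key x
    rw [wDeriv_mul (dσc w) (dLw w), hww w] at e
    have e2 : σc w * wDeriv L w * wDeriv L w + σc w * wDeriv (wDeriv L) w = 0 := by
      rw [key w]; exact e
    have e3 : σc w * (wDeriv (wDeriv L) w + (wDeriv L w) ^ 2) = 0 := by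
      linear_combination e2
    rcases mul_eq_zero.mp e3 with h | h
    · exact absurd h (hne w)
    · linear_combination h
  set p := wDeriv L w₀ with hp
  set m := wDerivBar (wDeriv L) w₀ with hm
  have hLww : ContDiff ℝ ∞ (wDeriv (wDeriv L)) := smooth_wDeriv hLw
  have dLww : ∀ w, DifferentiableAt ℝ (wDeriv (wDeriv L)) w := fun w =>
    (hLww.differentiable one_le_inf).differentiableAt
  -- functional form of F1
  have F1' : wDeriv (wDeriv L) = fun x => -(wDeriv L x * wDeriv L x) := by
    funext x; rw [F1 x]; ring
  -- F2 : L_www = 2 p^3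
  have F2 : wDeriv (wDeriv (wDeriv L)) w₀ = 2 * p ^ 3 := by
    rw [F1']
    have : wDeriv (fun x => -(wDeriv L x * wDeriv L x)) w₀
        = -wDeriv (fun x => wDeriv L x * wDeriv L x) w₀ := wDeriv_neg
    rw [this, wDeriv_mul (dLw w₀) (dLw w₀), F1 w₀, ← hp]
    ring
  -- F3 : L_ww w̄ = -2 p m
  have F3 : wDerivBar (wDeriv (wDeriv L)) w₀ = -2 * p * m := by
    rw [F1']
    have : wDerivBar (fun x => -(wDeriv L x * wDeriv L x)) w₀
        = -wDerivBar (fun x => wDeriv L x * wDeriv L x) w₀ := wDerivBar_neg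
    rw [this, wDerivBar_mul (dLw w₀) (dLw w₀), ← hp, ← hm]
    ring
  -- L is real-valued : conj ∘ L = L
  have hLreal : (fun x => (starRingEnd ℂ) (L x)) = L := by
    funext x; rw [hL]; simp
  -- wDerivBar L = conj (wDeriv L)
  have F5 : ∀ w, wDerivBar L w = (starRingEnd ℂ) (wDeriv L w) := by
    intro w
    conv_lhs => rw [← hLreal]
    exact wDerivBar_conj (dL w)
  -- conj ∘ wDeriv L = wDerivBar L
  have hconjLw : (fun x => (starRingEnd ℂ) (wDeriv L x)) = wDerivBar L := by
    funext x; rw [F5 x]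
  -- m is real
  have hmreal : (starRingEnd ℂ) m = m := by
    rw [hm]
    have h1 : (starRingEnd ℂ) (wDerivBar (wDeriv L) w₀)
        = wDeriv (fun x => (starRingEnd ℂ) (wDeriv L x)) w₀ :=
      (wDeriv_conj (dLw w₀)).symm
    rw [h1, hconjLw, wDeriv_wDerivBar_comm hLs w₀]
  -- F4 : L_w w̄ w̄ = -2 conj(p) m
  have F4 : wDerivBar (wDerivBar (wDeriv L)) w₀ = -2 * (starRingEnd ℂ) p * m := by
    -- wDerivBar g w₀ = conj (wDeriv (conj ∘ g) w₀) with g = wDerivBar (wDeriv L)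
    have hg : ∀ w, DifferentiableAt ℝ (wDerivBar (wDeriv L)) w := fun w =>
      ((smooth_wDerivBar hLw).differentiable one_le_inf).differentiableAt
    have hgreal : (fun x => (starRingEnd ℂ) (wDerivBar (wDeriv L) x))
        = wDerivBar (wDeriv L) := by
      funext x
      have h1 : (starRingEnd ℂ) (wDerivBar (wDeriv L) x)
          = wDeriv (fun y => (starRingEnd ℂ) (wDeriv L y)) x :=
        (wDeriv_conj (dLw x)).symm
      rw [h1, hconjLw, wDeriv_wDerivBar_comm hLs x]
    have h2 : wDeriv (fun x => (starRingEnd ℂ) (wDerivBar (wDeriv L) x)) w₀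
        = (starRingEnd ℂ) (wDerivBar (wDerivBar (wDeriv L)) w₀) :=
      wDeriv_conj (hg w₀)
    rw [hgreal] at h2
    -- h2 : wDeriv (wDerivBar (wDeriv L)) w₀ = conj (wDerivBar (wDerivBar (wDeriv L)) w₀)
    have h3 : wDeriv (wDerivBar (wDeriv L)) w₀ = wDerivBar (wDeriv (wDeriv L)) w₀ :=
      wDeriv_wDerivBar_comm hLw w₀
    have h4 : (starRingEnd ℂ) (wDerivBar (wDerivBar (wDeriv L)) w₀) = -2 * p * m := by
      rw [← h2, h3, F3]
    have := congrArg (starRingEnd ℂ) h4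
    rw [Complex.conj_conj] at this
    rw [this]
    simp only [map_mul, map_neg, map_ofNat, hmreal]
  rw [F2, F3, F4, F1 w₀, F5 w₀]
  ring
end

section
/- Let a, b, c, d ∈ ℝ satisfy the six equations: −(1/2)a² − (3/2)b² + (1/2)c² + (3/2)d² = 0; 2ab − 2cd = 0; −(3/2)a² − (1/2)b² + (3/2)c² + (1/2)d² = 0; −ac − 3bd = 0; 2bc + 2ad = 0; and −3ac − bd = 0. Then a = b = c = d = 0. -/
/-- The algebraic system arising from the biharmonicity of a
linear map between 2-spheres has only the trivial solution. -/
theorem stmt_11 (a b c d : ℝ)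
    (h1 : -(1 / 2) * a ^ 2 - (3 / 2) * b ^ 2 + (1 / 2) * c ^ 2 + (3 / 2) * d ^ 2 = 0)
    (h2 : 2 * a * b - 2 * c * d = 0)
    (h3 : -(3 / 2) * a ^ 2 - (1 / 2) * b ^ 2 + (3 / 2) * c ^ 2 + (1 / 2) * d ^ 2 = 0)
    (h4 : -(a * c) - 3 * (b * d) = 0)
    (h5 : 2 * b * c + 2 * a * d = 0)
    (h6 : -3 * (a * c) - b * d = 0) :
    a = 0 ∧ b = 0 ∧ c = 0 ∧ d = 0 := by
  have hac : a * c = 0 := by linarith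
  have hbd : b * d = 0 := by linarith
  have ha2 : a ^ 2 = c ^ 2 := by linarith
  have hb2 : b ^ 2 = d ^ 2 := by linarith
  have ha : a = 0 := by
    rcases mul_eq_zero.mp hac with h | h
    · exact h
    · exact pow_eq_zero_iff (n := 2) (by norm_num) |>.mp (by rw [ha2, h]; ring)
  have hb : b = 0 := by
    rcases mul_eq_zero.mp hbd with h | h
    · exact h
    · exact pow_eq_zero_iff (n := 2) (by norm_num) |>.mp (by rw [hb2, h]; ring)
  have hc : c = 0 := pow_eq_zero_iff (n := 2) (by norm_num) |>.mp (by rw [← ha2, ha]; ring)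
  have hd : d = 0 := pow_eq_zero_iff (n := 2) (by norm_num) |>.mp (by rw [← hb2, hb]; ring)
  exact ⟨ha, hb, hc, hd⟩
end

section
/- Let a, b, c, d ∈ ℝ and define φ : ℂ → ℂ by φ(x + iy) = (ax + by) + i(cx + dy). Its Wirtinger derivatives are the constants φ_z = (1/2)((a + d) + i(c − b)) and φ_{z̄} = (1/2)((a − d) + i(c + b)). Suppose that for every z ∈ ℂ: −2·φ(z)² + 3·conj(z)·φ(z)·φ_{z̄} + 3·z·φ(z)·φ_z − 6·z·conj(z)·φ_z·φ_{z̄} = 0. Then a = b = c = d = 0. -/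
/-- Let `φ(x+iy) = (ax+by) + i(cx+dy)`, whose Wirtinger
derivatives are the constants `φ_z = (1/2)((a+d) + i(c-b))` and
`φ_z̄ = (1/2)((a-d) + i(c+b))`.  If
`-2·φ(z)² + 3·conj z·φ(z)·φ_z̄ + 3·z·φ(z)·φ_z - 6·z·conj z·φ_z·φ_z̄ = 0`
for every `z ∈ ℂ`, then `a = b = c = d = 0`. -/
theorem stmt_12 (a b c d : ℝ) (φ : ℂ → ℂ)
    (hφ : φ = fun z => ((a * z.re + b * z.im : ℝ) : ℂ) +
      ((c * z.re + d * z.im : ℝ) : ℂ) * Complex.I)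
    (P Q : ℂ)
    (hP : P = (1 / 2) * (((a + d : ℝ) : ℂ) + ((c - b : ℝ) : ℂ) * Complex.I))
    (hQ : Q = (1 / 2) * (((a - d : ℝ) : ℂ) + ((c + b : ℝ) : ℂ) * Complex.I))
    (h : ∀ z : ℂ, -2 * φ z ^ 2 + 3 * (starRingEnd ℂ z) * φ z * Q
      + 3 * z * φ z * P - 6 * z * (starRingEnd ℂ z) * P * Q = 0) :
    a = 0 ∧ b = 0 ∧ c = 0 ∧ d = 0 := by
  have hphi1 : φ 1 = P + Q := by
    rw [hφ, hP, hQ]; simp; ring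
  have hphiI : φ Complex.I = Complex.I * (P - Q) := by
    rw [hφ, hP, hQ]; simp; linear_combination (b : ℂ) * Complex.I_sq
  have h1 := h 1
  rw [hphi1, map_one] at h1
  have h2 := h Complex.I
  rw [hphiI, Complex.conj_I] at h2
  have e1 : P ^ 2 + Q ^ 2 - 4 * P * Q = 0 := by linear_combination h1
  have e2 : P ^ 2 + Q ^ 2 + 4 * P * Q = 0 := by
    linear_combination -h2 + (P ^ 2 + Q ^ 2 + 4 * P * Q) * Complex.I_sq
  have e3 : P * Q = 0 := by linear_combination (e2 - e1) / 8
  have e4 : P ^ 2 + Q ^ 2 = 0 := by linear_combination (e1 + e2) / 2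
  have hPQ : P = 0 ∧ Q = 0 := by
    rcases mul_eq_zero.mp e3 with h0 | h0
    · refine ⟨h0, ?_⟩
      have : Q ^ 2 = 0 := by rw [h0] at e4; linear_combination e4
      exact pow_eq_zero_iff (two_ne_zero) |>.mp this
    · refine ⟨?_, h0⟩
      have : P ^ 2 = 0 := by rw [h0] at e4; linear_combination e4
      exact pow_eq_zero_iff (two_ne_zero) |>.mp this
  obtain ⟨hP0, hQ0⟩ := hPQ
  rw [hP0] at hP; rw [hQ0] at hQ
  have hP' : ((a + d : ℝ) : ℂ) + ((c - b : ℝ) : ℂ) * Complex.I = 0 := by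
    linear_combination -2 * hP
  have hQ' : ((a - d : ℝ) : ℂ) + ((c + b : ℝ) : ℂ) * Complex.I = 0 := by
    linear_combination -2 * hQ
  simp [Complex.ext_iff] at hP' hQ'
  refine ⟨by linarith [hP'.1, hQ'.1], by linarith [hP'.2, hQ'.2],
    by linarith [hP'.2, hQ'.2], by linarith [hP'.1, hQ'.1]⟩
end

section
/- Let a, b, c, d ∈ ℝ and set v(x,y) = cx + dy. Then the following two equations hold for all (x, y) ∈ ℝ²: (i) (−4ac + 4acd)·e^{2y} + 8a³c·e^{4y − 2v} + (8ab²c − 2a²b + 8a²bd)·e^{2y − 2v} + (8b³d + 2b³)·e^{−2v} − 2bd − 4bd² = 0, and (ii) (8b²d + 8b²d² + b²)·e^{−2v} + 8a²c²·e^{4y − 2v} − 2b⁴·e^{−4v} − 4a²b²·e^{2y − 4v} − 2a⁴·e^{4y − 4v} + (2a² + 4b²c² − 4a²d + 4a²d² − 4abc + 8abcd)·e^{2y − 2v} = 0, if and only if either (a = 0 and b = 0) or (b = 0, c = 0, d = 1, and a² = 1). -/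
/-- With `v = cx + dy`, the two equations of the biharmonic map
system for the linear map `φ(x,y) = (ax+by, cx+dy)` between hyperbolic planes
hold for all `(x,y) ∈ ℝ²` iff `(a = 0 ∧ b = 0)` or
`(b = 0 ∧ c = 0 ∧ d = 1 ∧ a² = 1)`. -/
theorem stmt_14 (a b c d : ℝ) :
    (∀ x y : ℝ,
      (-(4 * a * c) + 4 * a * c * d) * Real.exp (2 * y)
        + 8 * a ^ 3 * c * Real.exp (4 * y - 2 * (c * x + d * y))
        + (8 * a * b ^ 2 * c - 2 * a ^ 2 * b + 8 * a ^ 2 * b * d) *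
            Real.exp (2 * y - 2 * (c * x + d * y))
        + (8 * b ^ 3 * d + 2 * b ^ 3) * Real.exp (-(2 * (c * x + d * y)))
        - 2 * b * d - 4 * b * d ^ 2 = 0 ∧
      (8 * b ^ 2 * d + 8 * b ^ 2 * d ^ 2 + b ^ 2) *
            Real.exp (-(2 * (c * x + d * y)))
        + 8 * a ^ 2 * c ^ 2 * Real.exp (4 * y - 2 * (c * x + d * y))
        - 2 * b ^ 4 * Real.exp (-(4 * (c * x + d * y)))
        - 4 * a ^ 2 * b ^ 2 * Real.exp (2 * y - 4 * (c * x + d * y))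
        - 2 * a ^ 4 * Real.exp (4 * y - 4 * (c * x + d * y))
        + (2 * a ^ 2 + 4 * b ^ 2 * c ^ 2 - 4 * a ^ 2 * d + 4 * a ^ 2 * d ^ 2
            - 4 * a * b * c + 8 * a * b * c * d) *
            Real.exp (2 * y - 2 * (c * x + d * y)) = 0) ↔
    ((a = 0 ∧ b = 0) ∨ (b = 0 ∧ c = 0 ∧ d = 1 ∧ a ^ 2 = 1)) := by
  constructor
  · intro H
    set L := Real.log 2 with hLdef
    have heL : Real.exp L = 2 := Real.exp_log two_pos
    have hLpos : 0 < L := Real.log_pos (by norm_num)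
    have hL0 : L ≠ 0 := ne_of_gt hLpos
    have heL' : Real.exp (-L) = 1 / 2 := by rw [Real.exp_neg, heL]; norm_num
    by_cases hc : c = 0
    · subst hc
      by_cases hb : b = 0
      · subst hb
        by_cases hd : d = 1
        · subst hd
          have h := (H 0 0).2
          norm_num at h
          have h' : a ^ 2 - a ^ 4 = 0 := by linarith
          have key : a ^ 2 * (a ^ 2 - 1) = 0 := by linear_combination -h'
          rcases mul_eq_zero.mp key with h1 | h1
          · exact Or.inl ⟨pow_eq_zero_iff (by norm_num) |>.mp h1, rfl⟩
          · exact Or.inr ⟨rfl, rfl, rfl, by linarith⟩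
        · have h2d : (2 : ℝ) - 2 * d ≠ 0 := fun h => hd (by linarith)
          have h0 := (H 0 0).2
          norm_num at h0
          have h1 := (H 0 (L / (2 - 2 * d))).2
          rw [show (4 : ℝ) * (L / (2 - 2 * d)) - 4 * (0 * 0 + d * (L / (2 - 2 * d))) = L + L by
                field_simp; ring,
              show (2 : ℝ) * (L / (2 - 2 * d)) - 2 * (0 * 0 + d * (L / (2 - 2 * d))) = L by
                field_simp; ring,
              Real.exp_add, heL] at h1
          have ha4 : a ^ 4 = 0 := by linear_combination h0 / 2 - h1 / 4
          exact Or.inl ⟨pow_eq_zero_iff (by norm_num) |>.mp ha4, rfl⟩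
      · exfalso
        by_cases hd0 : d = 0
        · subst hd0
          have h0 := (H 0 0).1
          norm_num at h0
          have h1 := (H 0 (L / 2)).1
          rw [show (2 : ℝ) * (L / 2) - 2 * (0 * 0 + 0 * (L / 2)) = L by ring,
              show -(2 * ((0 : ℝ) * 0 + 0 * (L / 2))) = 0 by ring,
              Real.exp_zero, heL] at h1
          have hb3 : b ^ 3 = 0 := by linear_combination h0 - h1 / 2
          exact pow_ne_zero 3 hb hb3
        · by_cases hd1 : d = 1
          · subst hd1
            have h0 := (H 0 0).1
            norm_num at h0
            have h1 := (H 0 (-(L / 2))).1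
            rw [show (2 : ℝ) * (-(L / 2)) - 2 * (0 * 0 + 1 * (-(L / 2))) = 0 by ring,
                show -(2 * ((0 : ℝ) * 0 + 1 * (-(L / 2)))) = L by ring,
                Real.exp_zero, heL] at h1
            have hb3 : b ^ 3 = 0 := by linear_combination (h1 - h0) / 10
            exact pow_ne_zero 3 hb hb3
          · -- generic case: d ≠ 0, d ≠ 1, b ≠ 0
            have h0 := (H 0 0).1
            norm_num at h0
            have h1 := (H 0 (L / 2)).1
            rw [show (2 : ℝ) * (L / 2) - 2 * (0 * 0 + d * (L / 2)) = L + -(d * L) by ring,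
                show -(2 * ((0 : ℝ) * 0 + d * (L / 2))) = -(d * L) by ring,
                Real.exp_add, heL] at h1
            have h2 := (H 0 (-(L / 2))).1
            rw [show (2 : ℝ) * (-(L / 2)) - 2 * (0 * 0 + d * (-(L / 2))) = -L + d * L by ring,
                show -(2 * ((0 : ℝ) * 0 + d * (-(L / 2)))) = d * L by ring,
                Real.exp_add, heL'] at h2
            have huw : Real.exp (-(d * L)) * Real.exp (d * L) = 1 := by
              rw [← Real.exp_add]; simp
            have k1 : (-4 * a ^ 2 * b + 16 * a ^ 2 * b * d + 8 * b ^ 3 * d + 2 * b ^ 3) *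
                Real.exp (-(d * L))
                = -2 * a ^ 2 * b + 8 * a ^ 2 * b * d + 8 * b ^ 3 * d + 2 * b ^ 3 := by
              linear_combination h1 - h0
            have k2 : (-(a ^ 2 * b) + 4 * a ^ 2 * b * d + 8 * b ^ 3 * d + 2 * b ^ 3) *
                Real.exp (d * L)
                = -2 * a ^ 2 * b + 8 * a ^ 2 * b * d + 8 * b ^ 3 * d + 2 * b ^ 3 := by
              linear_combination h2 - h0
            have k3 : ((-4 * a ^ 2 * b + 16 * a ^ 2 * b * d + 8 * b ^ 3 * d + 2 * b ^ 3) *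
                  Real.exp (-(d * L))) *
                ((-(a ^ 2 * b) + 4 * a ^ 2 * b * d + 8 * b ^ 3 * d + 2 * b ^ 3) *
                  Real.exp (d * L))
                = (-2 * a ^ 2 * b + 8 * a ^ 2 * b * d + 8 * b ^ 3 * d + 2 * b ^ 3) *
                  (-2 * a ^ 2 * b + 8 * a ^ 2 * b * d + 8 * b ^ 3 * d + 2 * b ^ 3) := by
              rw [k1, k2]
            have hab : (-2 * a ^ 2 * b + 8 * a ^ 2 * b * d) * (8 * b ^ 3 * d + 2 * b ^ 3) = 0 := by
              linear_combination 2 * k3 -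
                2 * ((-4 * a ^ 2 * b + 16 * a ^ 2 * b * d + 8 * b ^ 3 * d + 2 * b ^ 3) *
                  (-(a ^ 2 * b) + 4 * a ^ 2 * b * d + 8 * b ^ 3 * d + 2 * b ^ 3)) * huw
            have final : (8 * b ^ 3 * d + 2 * b ^ 3 = 0) →
                (-2 * a ^ 2 * b + 8 * a ^ 2 * b * d = 0) → False := by
              intro hB hA
              have h8 : b ^ 3 * (8 * d + 2) = 0 := by linear_combination hB
              rcases mul_eq_zero.mp h8 with h | h
              · exact pow_ne_zero 3 hb h
              · have hd4 : d = -(1 / 4) := by linarith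
                have hG : -2 * b * d - 4 * b * d ^ 2 = 0 := by
                  linear_combination h0 - hA - hB
                have hb0 : b = 0 := by
                  linear_combination 4 * hG + (4 * b + 16 * b * d) * hd4
                exact hb hb0
            rcases mul_eq_zero.mp hab with hA | hB
            · have hBu : (8 * b ^ 3 * d + 2 * b ^ 3) * (Real.exp (-(d * L)) - 1) = 0 := by
                linear_combination h1 - h0 - (2 * Real.exp (-(d * L)) - 1) * hA
              rcases mul_eq_zero.mp hBu with hB | hU
              · exact final hB hA
              · have hU1 : Real.exp (-(d * L)) = Real.exp 0 := by
                  rw [Real.exp_zero]; linarith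
                have : -(d * L) = 0 := Real.exp_eq_exp.mp hU1
                have : d * L = 0 := by linarith
                rcases mul_eq_zero.mp this with h | h
                · exact hd0 h
                · exact hL0 h
            · have hAu : (-2 * a ^ 2 * b + 8 * a ^ 2 * b * d) *
                  (2 * Real.exp (-(d * L)) - 1) = 0 := by
                linear_combination h1 - h0 - (Real.exp (-(d * L)) - 1) * hB
              rcases mul_eq_zero.mp hAu with hA | hU
              · exact final hB hA
              · have hU1 : Real.exp (-(d * L)) = Real.exp (-L) := by
                  rw [heL']; linarith
                have h' : -(d * L) = -L := Real.exp_eq_exp.mp hU1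
                have : (d - 1) * L = 0 := by linarith [h']
                rcases mul_eq_zero.mp this with h | h
                · exact hd1 (by linarith)
                · exact hL0 h
    · -- c ≠ 0
      have E0 := (H 0 0).2
      norm_num at E0
      have hv1 : c * (-L / (2 * c)) + d * 0 = -(L / 2) := by
        field_simp; ring
      have h1 := (H (-L / (2 * c)) 0).2
      rw [hv1,
          show -(2 * -(L / 2)) = L by ring,
          show (4 : ℝ) * 0 - 2 * -(L / 2) = L by ring,
          show -(4 * -(L / 2)) = L + L by ring,
          show (2 : ℝ) * 0 - 4 * -(L / 2) = L + L by ring,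
          show (4 : ℝ) * 0 - 4 * -(L / 2) = L + L by ring,
          show (2 : ℝ) * 0 - 2 * -(L / 2) = L by ring] at h1
      simp only [Real.exp_add] at h1
      rw [heL] at h1
      have key : (a ^ 2 + b ^ 2) ^ 2 = 0 := by
        linear_combination E0 / 2 - h1 / 4
      have hab2 : a ^ 2 + b ^ 2 = 0 := pow_eq_zero_iff (by norm_num) |>.mp key
      have ha2 : a ^ 2 = 0 := by linarith [sq_nonneg a, sq_nonneg b]
      have hb2 : b ^ 2 = 0 := by linarith [sq_nonneg a, sq_nonneg b]
      exact Or.inl ⟨pow_eq_zero_iff (by norm_num) |>.mp ha2,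
        pow_eq_zero_iff (by norm_num) |>.mp hb2⟩
  · rintro (⟨ha, hb⟩ | ⟨hb, hc, hd, ha⟩) <;> intro x y
    · subst ha; subst hb
      constructor <;> norm_num
    · subst hb; subst hc; subst hd
      constructor
      · norm_num
      · rw [show (4 : ℝ) * y - 4 * (0 * x + 1 * y) = 0 by ring,
            show (2 : ℝ) * y - 2 * (0 * x + 1 * y) = 0 by ring,
            Real.exp_zero]
        linear_combination (-2 * a ^ 2) * ha
end

section
/- Let a, b, c, d ∈ ℝ and set v(x,y) = cx + dy. Then the equation (−4ac + 4acd)·e^{2y} + 8a³c·e^{4y − 2v} + (8ab²c − 2a²b + 8a²bd)·e^{2y − 2v} + (8b³d + 2b³)·e^{−2v} − 2bd − 4bd² = 0 holds for all (x, y) ∈ ℝ² if and only if either (a = 0 and b = 0) or (b = 0 and c = 0). -/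
lemma vand_aux (s r C D E : ℝ) (hs1 : s ≠ 1) (hr1 : r ≠ 1) (hsr : s ≠ r)
    (h0 : C + D + E = 0) (h1 : C * s + D + E * r = 0)
    (h2 : C * s ^ 2 + D + E * r ^ 2 = 0) :
    C = 0 ∧ D = 0 ∧ E = 0 := by
  have hC : C * ((s - 1) * (s - r)) = 0 := by linear_combination h2 - (1 + r) * h1 + r * h0
  have hE : E * ((r - 1) * (r - s)) = 0 := by linear_combination h2 - (1 + s) * h1 + s * h0
  have hC0 : C = 0 := by
    rcases mul_eq_zero.mp hC with h | h
    · exact h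
    rcases mul_eq_zero.mp h with h | h
    · exact absurd (by linarith) hs1
    · exact absurd (by linarith) hsr
  have hE0 : E = 0 := by
    rcases mul_eq_zero.mp hE with h | h
    · exact h
    rcases mul_eq_zero.mp h with h | h
    · exact absurd (by linarith) hr1
    · exact absurd (show s = r by linarith) hsr
  refine ⟨hC0, by linarith [h0], hE0⟩

/-- From `8 b³ d + 2 b³ = 0` and `2 b d + 4 b d² = 0`, conclude `b = 0`. -/
lemma b_zero_aux (b d : ℝ) (hD : 8 * b ^ 3 * d + 2 * b ^ 3 = 0)
    (hE : 2 * b * d + 4 * b * d ^ 2 = 0) : b = 0 := by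
  by_contra hb
  have hb3 : b ^ 3 ≠ 0 := pow_ne_zero _ hb
  have h1 : (2 * b ^ 3) * (4 * d + 1) = 0 := by linear_combination hD
  have hd : 4 * d + 1 = 0 := by
    rcases mul_eq_zero.mp h1 with h | h
    · exact absurd (by linarith [h] : b ^ 3 = 0) hb3
    · exact h
  have h2 : (2 * b) * (d * (1 + 2 * d)) = 0 := by linear_combination hE
  rcases mul_eq_zero.mp h2 with h | h
  · have : b = 0 := by linarith
    exact hb this
  · nlinarith [h, hd]

/-- With `v = cx + dy`, the first equation of the biharmonic map
system for the linear map `φ(x,y) = (ax+by, cx+dy)` between hyperbolic planes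
holds for all `(x,y) ∈ ℝ²` iff `(a = 0 ∧ b = 0)` or `(b = 0 ∧ c = 0)`. -/
theorem stmt_15 (a b c d : ℝ) :
    (∀ x y : ℝ,
      (-(4 * a * c) + 4 * a * c * d) * Real.exp (2 * y)
        + 8 * a ^ 3 * c * Real.exp (4 * y - 2 * (c * x + d * y))
        + (8 * a * b ^ 2 * c - 2 * a ^ 2 * b + 8 * a ^ 2 * b * d) *
            Real.exp (2 * y - 2 * (c * x + d * y))
        + (8 * b ^ 3 * d + 2 * b ^ 3) * Real.exp (-(2 * (c * x + d * y)))
        - 2 * b * d - 4 * b * d ^ 2 = 0) ↔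
    ((a = 0 ∧ b = 0) ∨ (b = 0 ∧ c = 0)) := by
  have hs2 : Real.exp 2 ≠ 1 := by simp [Real.exp_eq_one_iff]
  have hs4 : Real.exp 4 ≠ 1 := by simp [Real.exp_eq_one_iff]
  have hs42 : Real.exp 4 ≠ Real.exp 2 := by simp [Real.exp_eq_exp]
  constructor
  · intro h
    by_cases hc : c = 0
    · -- case c = 0 : show b = 0
      subst hc
      right
      refine ⟨?_, rfl⟩
      -- reduced equation: C e^{2y-2dy} + D e^{-2dy} + E = 0 with
      -- C = -2a²b + 8a²bd, D = 8b³d+2b³, E = -(2bd+4bd²)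
      have key : ∀ y : ℝ,
          (-2 * a ^ 2 * b + 8 * a ^ 2 * b * d) * Real.exp (2 * y - 2 * d * y)
            + (8 * b ^ 3 * d + 2 * b ^ 3) * Real.exp (-(2 * d * y))
            - 2 * b * d - 4 * b * d ^ 2 = 0 := by
        intro y
        have h1 := h 0 y
        rw [show 4 * y - 2 * (0 * 0 + d * y) = 4 * y - 2 * d * y by ring,
            show 2 * y - 2 * (0 * 0 + d * y) = 2 * y - 2 * d * y by ring,
            show -(2 * (0 * 0 + d * y)) = -(2 * d * y) by ring] at h1
        linear_combination h1
      -- multiply by e^{2dy}; evaluate at y = 0, 1, 2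
      set r : ℝ := Real.exp (2 * d) with hr
      have e0 := key 0
      rw [show 2 * (0:ℝ) - 2 * d * 0 = 0 by ring, show -(2 * d * (0:ℝ)) = 0 by ring,
          Real.exp_zero] at e0
      have e1 : (-2 * a ^ 2 * b + 8 * a ^ 2 * b * d) * Real.exp 2
          + (8 * b ^ 3 * d + 2 * b ^ 3)
          + (- 2 * b * d - 4 * b * d ^ 2) * r = 0 := by
        have k1 := key 1
        have m1 : Real.exp (2 * 1 - 2 * d * 1) * r = Real.exp 2 := by
          rw [hr, ← Real.exp_add]; congr 1; ring
        have m2 : Real.exp (-(2 * d * 1)) * r = 1 := by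
          rw [hr, ← Real.exp_add, show -(2 * d * 1) + 2 * d = 0 by ring, Real.exp_zero]
        linear_combination r * k1 - (-2 * a ^ 2 * b + 8 * a ^ 2 * b * d) * m1
          - (8 * b ^ 3 * d + 2 * b ^ 3) * m2
      have e2 : (-2 * a ^ 2 * b + 8 * a ^ 2 * b * d) * (Real.exp 2) ^ 2
          + (8 * b ^ 3 * d + 2 * b ^ 3)
          + (- 2 * b * d - 4 * b * d ^ 2) * r ^ 2 = 0 := by
        have k2 := key 2
        have m1 : Real.exp (2 * 2 - 2 * d * 2) * r ^ 2 = (Real.exp 2) ^ 2 := by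
          rw [hr, sq, sq, ← Real.exp_add, ← Real.exp_add, ← Real.exp_add]; congr 1; ring
        have m2 : Real.exp (-(2 * d * 2)) * r ^ 2 = 1 := by
          rw [hr, sq, ← Real.exp_add, ← Real.exp_add,
            show -(2 * d * 2) + (2 * d + 2 * d) = 0 by ring, Real.exp_zero]
        linear_combination r ^ 2 * k2 - (-2 * a ^ 2 * b + 8 * a ^ 2 * b * d) * m1
          - (8 * b ^ 3 * d + 2 * b ^ 3) * m2
      by_cases hr1 : r = 1
      · -- then d = 0
        have hd0 : d = 0 := by
          have := Real.exp_eq_one_iff (2 * d) |>.mp (by rw [← hr]; exact hr1)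
          linarith
        subst hd0
        rw [hr1] at e1
        have hCz : (-2 * a ^ 2 * b + 8 * a ^ 2 * b * 0) * (Real.exp 2 - 1) = 0 := by
          linear_combination e1 - e0
        have hC0 : (-2 * a ^ 2 * b + 8 * a ^ 2 * b * 0) = 0 := by
          rcases mul_eq_zero.mp hCz with h' | h'
          · exact h'
          · exact absurd (by linarith) hs2
        have : b ^ 3 = 0 := by linarith [e0, hC0]
        exact pow_eq_zero_iff (by norm_num) |>.mp this
      · by_cases hrs : r = Real.exp 2
        · -- then d = 1
          have hd1 : d = 1 := by
            have := Real.exp_eq_exp.mp (hr ▸ hrs : Real.exp (2 * d) = Real.exp 2)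
            linarith
          subst hd1
          rw [hrs] at e1 e2
          have hCE : ((-2 * a ^ 2 * b + 8 * a ^ 2 * b * 1) + (- 2 * b * 1 - 4 * b * 1 ^ 2))
              * (Real.exp 2 * (Real.exp 2 - 1)) = 0 := by
            linear_combination e2 - e1
          have hexp_pos : (0:ℝ) < Real.exp 2 := Real.exp_pos 2
          have hgt : (1:ℝ) < Real.exp 2 := Real.one_lt_exp_iff.mpr (by norm_num)
          have hCE0 : (-2 * a ^ 2 * b + 8 * a ^ 2 * b * 1) + (- 2 * b * 1 - 4 * b * 1 ^ 2) = 0 := by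
            rcases mul_eq_zero.mp hCE with h' | h'
            · exact h'
            · rcases mul_eq_zero.mp h' with h'' | h''
              · linarith
              · linarith
          have hD0 : 8 * b ^ 3 * 1 + 2 * b ^ 3 = 0 := by
            have := e1
            nlinarith [hCE0, e1]
          have : b ^ 3 = 0 := by linarith
          exact pow_eq_zero_iff (by norm_num) |>.mp this
        · -- generic: all three nodes distinct
          obtain ⟨hC0, hD0, hE0⟩ := vand_aux (Real.exp 2) r
            (-2 * a ^ 2 * b + 8 * a ^ 2 * b * d) (8 * b ^ 3 * d + 2 * b ^ 3)
            (-2 * b * d - 4 * b * d ^ 2) hs2 hr1 (fun hh => hrs hh.symm)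
            (by linear_combination e0) (by linear_combination e1) (by linear_combination e2)
          exact b_zero_aux b d hD0 (by linarith [hE0])
    · -- case c ≠ 0 : show a = 0 ∧ b = 0
      left
      set x0 : ℝ := -(Real.log 2) / (2 * c) with hx0def
      have hx0 : Real.exp (-(2 * c * x0)) = 2 := by
        rw [hx0def, show -(2 * c * (-(Real.log 2) / (2 * c))) = Real.log 2 by
          field_simp]
        exact Real.exp_log (by norm_num)
      have hsplit : ∀ y : ℝ,
          (8 * a ^ 3 * c * Real.exp (4 * y - 2 * d * y)
            + (8 * a * b ^ 2 * c - 2 * a ^ 2 * b + 8 * a ^ 2 * b * d) *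
              Real.exp (2 * y - 2 * d * y)
            + (8 * b ^ 3 * d + 2 * b ^ 3) * Real.exp (-(2 * d * y)) = 0)
          ∧ ((-(4 * a * c) + 4 * a * c * d) * Real.exp (2 * y)
            - 2 * b * d - 4 * b * d ^ 2 = 0) := by
        intro y
        have h1 := h 0 y
        rw [show 4 * y - 2 * (c * 0 + d * y) = 4 * y - 2 * d * y by ring,
            show 2 * y - 2 * (c * 0 + d * y) = 2 * y - 2 * d * y by ring,
            show -(2 * (c * 0 + d * y)) = -(2 * d * y) by ring] at h1
        have h2 := h x0 y
        rw [show 4 * y - 2 * (c * x0 + d * y) = (4 * y - 2 * d * y) + -(2 * c * x0) by ring,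
            show 2 * y - 2 * (c * x0 + d * y) = (2 * y - 2 * d * y) + -(2 * c * x0) by ring,
            show -(2 * (c * x0 + d * y)) = (-(2 * d * y)) + -(2 * c * x0) by ring,
            Real.exp_add, Real.exp_add, Real.exp_add, hx0] at h2
        constructor
        · linear_combination h2 - h1
        · linear_combination 2 * h1 - h2
      -- P part: A = 0 and 2bd + 4bd² = 0
      have p0 := (hsplit 0).2
      rw [show 2 * (0:ℝ) = 0 by ring, Real.exp_zero] at p0
      have p1 := (hsplit 1).2
      rw [show 2 * (1:ℝ) = 2 by norm_num] at p1
      have hA : (-(4 * a * c) + 4 * a * c * d) = 0 := by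
        have hAz : (-(4 * a * c) + 4 * a * c * d) * (Real.exp 2 - 1) = 0 := by
          linear_combination p1 - p0
        rcases mul_eq_zero.mp hAz with h' | h'
        · exact h'
        · exact absurd (by linarith) hs2
      have hE : 2 * b * d + 4 * b * d ^ 2 = 0 := by linarith [p0, hA]
      -- Q part at y = 0, 1, 2, multiplied by e^{2dy}
      have q0 := (hsplit 0).1
      rw [show 4 * (0:ℝ) - 2 * d * 0 = 0 by ring, show 2 * (0:ℝ) - 2 * d * 0 = 0 by ring,
          show -(2 * d * (0:ℝ)) = 0 by ring, Real.exp_zero] at q0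
      have q1 : 8 * a ^ 3 * c * Real.exp 4
          + (8 * a * b ^ 2 * c - 2 * a ^ 2 * b + 8 * a ^ 2 * b * d) * Real.exp 2
          + (8 * b ^ 3 * d + 2 * b ^ 3) = 0 := by
        have k := (hsplit 1).1
        have m1 : Real.exp (4 * 1 - 2 * d * 1) * Real.exp (2 * d) = Real.exp 4 := by
          rw [← Real.exp_add]; congr 1; ring
        have m2 : Real.exp (2 * 1 - 2 * d * 1) * Real.exp (2 * d) = Real.exp 2 := by
          rw [← Real.exp_add]; congr 1; ring
        have m3 : Real.exp (-(2 * d * 1)) * Real.exp (2 * d) = 1 := by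
          rw [← Real.exp_add, show -(2 * d * 1) + 2 * d = 0 by ring, Real.exp_zero]
        linear_combination Real.exp (2 * d) * k - 8 * a ^ 3 * c * m1
          - (8 * a * b ^ 2 * c - 2 * a ^ 2 * b + 8 * a ^ 2 * b * d) * m2
          - (8 * b ^ 3 * d + 2 * b ^ 3) * m3
      have q2 : 8 * a ^ 3 * c * (Real.exp 4) ^ 2
          + (8 * a * b ^ 2 * c - 2 * a ^ 2 * b + 8 * a ^ 2 * b * d) * (Real.exp 2) ^ 2
          + (8 * b ^ 3 * d + 2 * b ^ 3) = 0 := by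
        have k := (hsplit 2).1
        have hmul : Real.exp (2 * d) * Real.exp (2 * d) = Real.exp (4 * d) := by
          rw [← Real.exp_add]; congr 1; ring
        have m1 : Real.exp (4 * 2 - 2 * d * 2) * Real.exp (4 * d) = (Real.exp 4) ^ 2 := by
          rw [sq, ← Real.exp_add, ← Real.exp_add]; congr 1; ring
        have m2 : Real.exp (2 * 2 - 2 * d * 2) * Real.exp (4 * d) = (Real.exp 2) ^ 2 := by
          rw [sq, ← Real.exp_add, ← Real.exp_add]; congr 1; ring
        have m3 : Real.exp (-(2 * d * 2)) * Real.exp (4 * d) = 1 := by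
          rw [← Real.exp_add, show -(2 * d * 2) + 4 * d = 0 by ring, Real.exp_zero]
        linear_combination Real.exp (4 * d) * k - 8 * a ^ 3 * c * m1
          - (8 * a * b ^ 2 * c - 2 * a ^ 2 * b + 8 * a ^ 2 * b * d) * m2
          - (8 * b ^ 3 * d + 2 * b ^ 3) * m3
      have h42 : (Real.exp 2) ≠ (Real.exp 4) := fun hh => hs42 hh.symm
      obtain ⟨hB0, hD0, hC0⟩ := vand_aux (Real.exp 4) (Real.exp 2)
        (8 * a ^ 3 * c) (8 * b ^ 3 * d + 2 * b ^ 3)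
        (8 * a * b ^ 2 * c - 2 * a ^ 2 * b + 8 * a ^ 2 * b * d)
        hs4 hs2 hs42
        (by linarith [q0]) (by linarith [q1]) (by linarith [q2])
      have ha : a = 0 := by
        have h3 : a ^ 3 = 0 := by
          have : (8 * a ^ 3) * c = 0 := by linarith [hB0]
          rcases mul_eq_zero.mp this with h' | h'
          · linarith
          · exact absurd h' hc
        exact pow_eq_zero_iff (by norm_num) |>.mp h3
      exact ⟨ha, b_zero_aux b d hD0 hE⟩
  · rintro (⟨ha, hb⟩ | ⟨hb, hc⟩) <;> subst_vars <;> intro x y <;> ring_nf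
end
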